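/- arXiv:2303.11887 — 3 statements merged into one kernel-verified Lean document; each statement's English description precedes it below -/
import Mathlib

section
/- Let x = [x₁|…|x_ℓ] ∈ F_{q^m}^n have sum-rank weight τ with a fixed rank distribution rk_q(x_i) = τ_i for each i (Σ τ_i = τ). Then there exists a unique cartesian product V = V₁ × … × V_ℓ of elementary linear subspaces with V_i ∈ E_{τ_i}(F_{q^m}^η) such that x ∈ V. -/
open Module Submodule Set Finset

/-- The `F_q`-rank of a vector over `F_{q^m}`: the rank of its matrix representation
over `F_q`, i.e. the `F_q`-dimension of the span of its entries. -/
noncomputable def rkq (Fq : Type) {Fqm : Type} [Field Fq] [Field Fqm] [Algebra Fq Fqm]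
    {ι : Type} (v : ι → Fqm) : ℕ :=
  Module.finrank Fq (Submodule.span Fq (Set.range v))

/-- The ℓ-sum-rank weight of a vector split into ℓ blocks of length η. -/
noncomputable def wtSR (Fq : Type) {Fqm : Type} [Field Fq] [Field Fqm] [Algebra Fq Fqm]
    {l η : ℕ} (x : Fin l → Fin η → Fqm) : ℕ :=
  ∑ i, rkq Fq (x i)

/-- The ℓ-sum-rank distance. -/
noncomputable def dSR (Fq : Type) {Fqm : Type} [Field Fq] [Field Fqm] [Algebra Fq Fqm]
    {l η : ℕ} (x y : Fin l → Fin η → Fqm) : ℕ :=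
  wtSR Fq (x - y)

/-- The ball of sum-rank radius τ around x. -/
noncomputable def srBall (Fq : Type) {Fqm : Type} [Field Fq] [Field Fqm] [Algebra Fq Fqm]
    {l η : ℕ} (x : Fin l → Fin η → Fqm) (τ : ℕ) : Set (Fin l → Fin η → Fqm) :=
  {y | dSR Fq x y ≤ τ}

/-- The Gaussian binomial coefficient `[n choose t]_q = ∏_{i=1}^t (q^{n-t+i}-1)/(q^i-1)`
(the division is exact). -/
def qBinom (q n t : ℕ) : ℕ :=
  (∏ i ∈ Finset.range t, (q ^ (n - t + (i + 1)) - 1)) / (∏ i ∈ Finset.range t, (q ^ (i + 1) - 1))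

/-- `NMq q n m t`: the number of `m × n` matrices over `F_q` of rank `t`. -/
def NMq (q n m t : ℕ) : ℕ :=
  qBinom q n t * ∏ i ∈ Finset.range t, (q ^ m - q ^ i)

/-- A submodule of `F_{q^m}^n` is an elementary linear subspace if it is spanned by
vectors all of whose entries lie in `F_q`. -/
def IsElementary (Fq : Type) {Fqm : Type} [Field Fq] [Field Fqm] [Algebra Fq Fqm]
    {ι : Type} (V : Submodule Fqm (ι → Fqm)) : Prop :=
  ∃ S : Set (ι → Fqm), (∀ v ∈ S, ∀ i, ∃ c : Fq, v i = algebraMap Fq Fqm c) ∧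
    Submodule.span Fqm S = V

/-!
The blocks are independent, so consider one block `y ∈ K^ι`. Its elementary subspace is the
`K`-span of the row space of `y`, the `F`-subspace `{(f (y j))_j | f ∈ Dual F K}` of `F^ι`, whose
dimension is the column rank `rkq F y` because it is the range of the dual of `c ↦ ∑ c_j y_j`.
Applying `F`-linear functionals entrywise shows that `y` lies in the `K`-span of an `F`-subspace
`W` exactly when its row space is contained in `W`, and that `K`-spans of `F`-subspaces preserve
dimension. As every elementary subspace is such a span, one of dimension `rkq F y` containing `y`
is the span of a subspace of dimension `rkq F y` containing the row space, hence of the row space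
itself.
-/

theorem existsUnique_pi {ι : Type*} {β : ι → Type*} {p : ∀ i, β i → Prop}
    (h : ∀ i, ∃! b, p i b) : ∃! f : ∀ i, β i, ∀ i, p i (f i) := by
  choose f hf huniq using h
  exact ⟨f, hf, fun g hg => funext fun i => huniq i (g i) (hg i)⟩

section ElementarySubspaces

variable {F K ι : Type} [Field F] [Field K] [Algebra F K]

variable (F) in
noncomputable def rowSpace (y : ι → K) : Submodule F (ι → F) :=
  LinearMap.range (LinearMap.pi fun j => Dual.eval F K (y j))

lemma finrank_rowSpace [Fintype ι] (y : ι → K) :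
    finrank F (rowSpace F y) = rkq F y := by
  classical
  let A := Fintype.linearCombination F y
  let e := (Pi.basisFun F ι).dualBasis.equivFun
  have hrow : rowSpace F y = (LinearMap.range A.dualMap).map e.toLinearMap := by
    rw [rowSpace, ← LinearMap.range_comp]
    congr 1
    ext f j
    simp [e, A, Basis.dualBasis_equivFun]
  rw [hrow, LinearEquiv.finrank_map_eq, LinearMap.finrank_range_dualMap_eq_finrank_range,
    Fintype.range_linearCombination, rkq]

variable (K) in
noncomputable def extendScalars (W : Submodule F (ι → F)) : Submodule K (ι → K) :=
  span K ((Algebra.linearMap F K).compLeft ι '' W)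

lemma isElementary_extendScalars (W : Submodule F (ι → F)) :
    IsElementary F (extendScalars K W) := by
  refine ⟨_, ?_, rfl⟩
  rintro _ ⟨w, -, rfl⟩ j
  exact ⟨w j, rfl⟩

lemma IsElementary.exists_eq_extendScalars {V : Submodule K (ι → K)}
    (hV : IsElementary F V) : ∃ W : Submodule F (ι → F), extendScalars K W = V := by
  obtain ⟨S, hS, rfl⟩ := hV
  refine ⟨((span K S).restrictScalars F).comap ((Algebra.linearMap F K).compLeft ι),
    le_antisymm (span_le.mpr ?_) (span_mono ?_)⟩
  · rintro _ ⟨w, hw, rfl⟩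
    exact hw
  · intro v hv
    choose c hc using hS v hv
    have hcv : (Algebra.linearMap F K).compLeft ι c = v := funext fun j => (hc j).symm
    rw [← hcv]
    refine Set.mem_image_of_mem _ ?_
    simpa only [SetLike.mem_coe, mem_comap, restrictScalars_mem, hcv] using subset_span hv

lemma extendScalars_span (s : Set (ι → F)) :
    extendScalars K (span F s) = span K ((Algebra.linearMap F K).compLeft ι '' s) := by
  rw [extendScalars, ← map_coe, ← span_image, span_span_of_tower]

lemma compLeft_smul_compLeft_algebraMap (f : Dual F K) (a : K) (w : ι → F) :
    f.compLeft ι (a • (Algebra.linearMap F K).compLeft ι w) = f a • w := by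
  ext j
  change f (a * algebraMap F K (w j)) = f a * w j
  rw [mul_comm, ← Algebra.smul_def, map_smul, smul_eq_mul, mul_comm]

lemma rowSpace_le_of_mem_extendScalars {W : Submodule F (ι → F)} {y : ι → K}
    (hy : y ∈ extendScalars K W) : rowSpace F y ≤ W := by
  rintro _ ⟨f, rfl⟩
  change f.compLeft ι y ∈ W
  induction hy using span_induction generalizing f with
  | mem z hz =>
      obtain ⟨w, hw, rfl⟩ := hz
      rw [← one_smul K ((Algebra.linearMap F K).compLeft ι w), compLeft_smul_compLeft_algebraMap]
      exact W.smul_mem (f 1) hw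
  | zero => simp
  | add z z' _ _ hz hz' => simpa only [map_add] using W.add_mem (hz f) (hz' f)
  | smul a z _ hz =>
      -- `f ∘ (a • z) = (f ∘ (a * ·)) ∘ z`, and `f ∘ (a * ·)` is again a functional.
      exact hz (f ∘ₗ LinearMap.mulLeft F a)

lemma mem_extendScalars_of_rowSpace_le [Finite ι] {W : Submodule F (ι → F)} {y : ι → K}
    (hy : rowSpace F y ≤ W) : y ∈ extendScalars K W := by
  let U := span F (Set.range y)
  have : FiniteDimensional F U := FiniteDimensional.span_of_finite F (Set.finite_range y)
  let b := Module.finBasis F U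
  choose g hg using fun s => LinearMap.exists_extend (b.coord s)
  have hgy : ∀ s j, g s (y j) = b.repr ⟨y j, subset_span ⟨j, rfl⟩⟩ s := fun s j =>
    LinearMap.congr_fun (hg s) ⟨y j, _⟩
  have hexpand :
      y = ∑ s, (b s : K) • (Algebra.linearMap F K).compLeft ι (fun j => g s (y j)) := by
    ext j
    simp only [Finset.sum_apply, Pi.smul_apply, LinearMap.compLeft_apply, Function.comp_apply,
      Algebra.linearMap_apply, hgy]
    refine (congrArg Subtype.val (b.sum_repr ⟨y j, subset_span ⟨j, rfl⟩⟩)).symm.trans ?_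
    simp only [Submodule.coe_sum, Submodule.coe_smul, smul_eq_mul, Algebra.smul_def]
    exact Finset.sum_congr rfl fun s _ => mul_comm _ _
  rw [hexpand]
  exact sum_mem fun s _ => smul_mem _ _ (subset_span ⟨_, hy ⟨g s, rfl⟩, rfl⟩)

lemma mem_extendScalars_iff [Finite ι] {W : Submodule F (ι → F)} {y : ι → K} :
    y ∈ extendScalars K W ↔ rowSpace F y ≤ W :=
  ⟨rowSpace_le_of_mem_extendScalars, mem_extendScalars_of_rowSpace_le⟩

lemma LinearIndependent.compLeft_algebraMap {κ : Type*} {u : κ → ι → F}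
    (hu : LinearIndependent F u) :
    LinearIndependent K fun k => (Algebra.linearMap F K).compLeft ι (u k) := by
  rw [linearIndependent_iff'] at hu ⊢
  intro s g hg k hk
  have hcoeff : ∀ f : Dual F K, f (g k) = 0 := fun f => by
    refine hu s (fun k => f (g k)) ?_ k hk
    simpa only [map_sum, compLeft_smul_compLeft_algebraMap, map_zero] using
      congrArg (f.compLeft ι) hg
  exact (Module.forall_dual_apply_eq_zero_iff F (g k)).mp hcoeff

lemma finrank_extendScalars [Finite ι] (W : Submodule F (ι → F)) :
    finrank K (extendScalars K W) = finrank F W := by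
  let b := Module.finBasis F W
  let φ := (Algebra.linearMap F K).compLeft ι
  have hspan : span F (Set.range (W.subtype ∘ b)) = W := by
    rw [Set.range_comp, span_image, b.span_eq, map_subtype_top]
  have hind : LinearIndependent K (φ ∘ W.subtype ∘ b) :=
    (b.linearIndependent.map' W.subtype W.ker_subtype).compLeft_algebraMap
  have hext : extendScalars K W = span K (Set.range (φ ∘ W.subtype ∘ b)) := by
    conv_lhs => rw [← hspan]
    rw [extendScalars_span, ← Set.range_comp]
  rw [hext, finrank_span_eq_card hind, Fintype.card_fin]

theorem existsUnique_isElementary_finrank_eq_rkq [Fintype ι] (y : ι → K) :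
    ∃! V : Submodule K (ι → K), IsElementary F V ∧ finrank K V = rkq F y ∧ y ∈ V := by
  refine ⟨extendScalars K (rowSpace F y), ⟨isElementary_extendScalars _, ?_,
    mem_extendScalars_iff.mpr le_rfl⟩, ?_⟩
  · rw [finrank_extendScalars, finrank_rowSpace]
  rintro V ⟨hV, hrank, hy⟩
  obtain ⟨W, rfl⟩ := hV.exists_eq_extendScalars
  rw [finrank_extendScalars, ← finrank_rowSpace] at hrank
  rw [Submodule.eq_of_le_of_finrank_le (mem_extendScalars_iff.mp hy) hrank.le]

end ElementarySubspaces

theorem mem_unique_product_of_elementary_subspaces_general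
    (Fq Fqm : Type) [Field Fq] [Field Fqm] [Algebra Fq Fqm] (l η : ℕ)
    (x : Fin l → Fin η → Fqm) (τv : Fin l → ℕ)
    (hτ : ∀ i, rkq Fq (x i) = τv i) :
    ∃! V : Fin l → Submodule Fqm (Fin η → Fqm),
      ∀ i, IsElementary Fq (V i) ∧ Module.finrank Fqm (V i) = τv i ∧ x i ∈ V i := by
  have hblock : ∀ i, ∃! V : Submodule Fqm (Fin η → Fqm),
      IsElementary Fq V ∧ finrank Fqm V = τv i ∧ x i ∈ V := fun i =>
    hτ i ▸ existsUnique_isElementary_finrank_eq_rkq (x i)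
  exact existsUnique_pi hblock

/-- A vector with a fixed sum-rank weight distribution lies in a unique cartesian product
of elementary linear subspaces of the prescribed dimensions. -/
theorem mem_unique_product_of_elementary_subspaces
    (Fq Fqm : Type) [Field Fq] [Field Fqm] [Algebra Fq Fqm] (l η τ : ℕ)
    (x : Fin l → Fin η → Fqm) (τv : Fin l → ℕ)
    (hτ : ∀ i, rkq Fq (x i) = τv i) (hsum : (∑ i, τv i) = τ) :
    ∃! V : Fin l → Submodule Fqm (Fin η → Fqm),
      ∀ i, IsElementary Fq (V i) ∧ Module.finrank Fqm (V i) = τv i ∧ x i ∈ V i :=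
  mem_unique_product_of_elementary_subspaces_general Fq Fqm l η x τv hτ
end

section
/- Let V be a k-dimensional elementary linear subspace of F_{q^m}^n and u ∈ V with rank weight k. For any direct-sum decomposition V = A ⊕ B into elementary linear subspaces A of dimension a and B of dimension k−a, the projections satisfy rk_q(u^{(A)}) = a and rk_q(u^{(B)}) = k−a. -/
open Module Submodule Set Finset

/-!
Write a vector of an elementary space of dimension `d` in a basis of vectors with entries in
`F_q`: its entries then lie in the `F_q`-span of the `d` coordinates, so `rk_q ≤ d` on an
elementary space. As `rk_q` is subadditive,
`k = rk_q(u) ≤ rk_q(u^{(A)}) + rk_q(u^{(B)}) ≤ a + (k - a)`, which forces equality in both bounds.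
-/

variable {Fq Fqm : Type} [Field Fq] [Field Fqm] [Algebra Fq Fqm] {ι : Type}

lemma rkq_add_le [Finite ι] (x y : ι → Fqm) : rkq Fq (x + y) ≤ rkq Fq x + rkq Fq y := by
  have := FiniteDimensional.span_of_finite Fq (finite_range x)
  have := FiniteDimensional.span_of_finite Fq (finite_range y)
  have hle : span Fq (range (x + y)) ≤ span Fq (range x) ⊔ span Fq (range y) := by
    rw [span_le]
    rintro _ ⟨i, rfl⟩
    exact add_mem_sup (subset_span ⟨i, rfl⟩) (subset_span ⟨i, rfl⟩)
  exact (finrank_mono hle).trans (finrank_add_le_finrank_add_finrank _ _)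

lemma rkq_sum_smul_le_card {κ : Type*} [Fintype κ] (c : κ → Fqm) (w : κ → ι → Fqm)
    (hw : ∀ j i, ∃ e : Fq, w j i = algebraMap Fq Fqm e) :
    rkq Fq (∑ j, c j • w j) ≤ Fintype.card κ := by
  have hle : span Fq (range (∑ j, c j • w j)) ≤ span Fq (range c) := by
    rw [span_le]
    rintro _ ⟨i, rfl⟩
    simp only [Finset.sum_apply, Pi.smul_apply, smul_eq_mul]
    refine sum_mem fun j _ => ?_
    obtain ⟨e, he⟩ := hw j i
    rw [he, mul_comm, ← Algebra.smul_def]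
    exact smul_mem _ e (subset_span ⟨j, rfl⟩)
  have := FiniteDimensional.span_of_finite Fq (finite_range c)
  exact (finrank_mono hle).trans (finrank_range_le_card c)

lemma IsElementary.exists_basis [Finite ι] {W : Submodule Fqm (ι → Fqm)}
    (hW : IsElementary Fq W) :
    ∃ (κ : Type) (_ : Fintype κ) (w : κ → ι → Fqm),
      (∀ j i, ∃ e : Fq, w j i = algebraMap Fq Fqm e) ∧ span Fqm (range w) = W ∧
        Fintype.card κ = finrank Fqm W := by
  obtain ⟨S, hS, rfl⟩ := hW
  obtain ⟨t, htS, hspan, hli⟩ := exists_linearIndependent Fqm S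
  have : Fintype t := hli.setFinite.fintype
  refine ⟨t, inferInstance, Subtype.val, fun j => hS j (htS j.2), ?_, ?_⟩
  · rwa [Subtype.range_coe]
  · rw [← hspan, ← finrank_span_eq_card hli, Subtype.range_coe]

lemma IsElementary.rkq_le_finrank [Finite ι] {W : Submodule Fqm (ι → Fqm)}
    (hW : IsElementary Fq W) {u : ι → Fqm} (hu : u ∈ W) : rkq Fq u ≤ finrank Fqm W := by
  obtain ⟨κ, _, w, hw, rfl, hcard⟩ := hW.exists_basis
  obtain ⟨c, rfl⟩ := (mem_span_range_iff_exists_fun Fqm).mp hu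
  exact hcard ▸ rkq_sum_smul_le_card c w hw

theorem rkq_proj_of_elementary_decomposition_general
    (Fq Fqm : Type) [Field Fq] [Field Fqm] [Algebra Fq Fqm] (n k a : ℕ) (ha : a ≤ k)
    (A B : Submodule Fqm (Fin n → Fqm))
    (hA : IsElementary Fq A) (hB : IsElementary Fq B)
    (hdA : Module.finrank Fqm A = a)
    (hdB : Module.finrank Fqm B = k - a)
    (u uA uB : Fin n → Fqm) (hu : rkq Fq u = k)
    (huA : uA ∈ A) (huB : uB ∈ B) (hsum : u = uA + uB) :
    rkq Fq uA = a ∧ rkq Fq uB = k - a := by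
  have hrkA : rkq Fq uA ≤ a := hdA ▸ hA.rkq_le_finrank huA
  have hrkB : rkq Fq uB ≤ k - a := hdB ▸ hB.rkq_le_finrank huB
  have hrk : k ≤ rkq Fq uA + rkq Fq uB := hu ▸ hsum ▸ rkq_add_le uA uB
  omega

/-- Projections of a full-rank vector of an elementary subspace V = A ⊕ B onto the
elementary components have ranks equal to the component dimensions. -/
theorem rkq_proj_of_elementary_decomposition
    (Fq Fqm : Type) [Field Fq] [Field Fqm] [Algebra Fq Fqm] (n k a : ℕ) (ha : a ≤ k)
    (V A B : Submodule Fqm (Fin n → Fqm))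
    (hV : IsElementary Fq V) (hA : IsElementary Fq A) (hB : IsElementary Fq B)
    (hdV : Module.finrank Fqm V = k) (hdA : Module.finrank Fqm A = a)
    (hdB : Module.finrank Fqm B = k - a)
    (hinf : A ⊓ B = ⊥) (hsup : A ⊔ B = V)
    (u uA uB : Fin n → Fqm) (huV : u ∈ V) (hu : rkq Fq u = k)
    (huA : uA ∈ A) (huB : uB ∈ B) (hsum : u = uA + uB) :
    rkq Fq uA = a ∧ rkq Fq uB = k - a :=
  rkq_proj_of_elementary_decomposition_general Fq Fqm n k a ha A B hA hB hdA hdB u uA uB hu huA huB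
    hsum
end

section
/- Let V be a k-dimensional elementary linear subspace of F_{q^m}^n and A an a-dimensional elementary linear subspace of V. Then there exist exactly q^{a(k−a)} elementary linear subspaces B ⊆ V of dimension k−a with A ⊕ B = V; consequently there are q^{a(k−a)} · [k choose a]_q ordered pairs (A,B) of elementary linear subspaces of V with dim A = a, dim B = k−a, and A ⊕ B = V. -/
open Module Submodule Set Finset

/-!
An elementary subspace of `L^ι` is determined by its `K`-rational points: `W ↦ span_L W` and
`V ↦ V ∩ K^ι` are inverse, inclusion- and dimension-preserving bijections between `K`-subspaces
of `K^ι` and elementary `L`-subspaces of `L^ι` (dimension is preserved because `K`-linearly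
independent vectors of `K^ι` stay `L`-linearly independent). Since `⊓ = ⊥` can be read off
dimensions once the sum is known, the count transfers to `V ∩ K^ι ≅ K^k`. There a complement of
an `a`-dimensional `A` is the graph of a linear map from a fixed complement to `A`, giving
`q^(a(k-a))` complements, and summing over the `[k choose a]_q` choices of `A` counts the pairs.
-/

theorem Nat.card_eq_mul_of_card_fiber {α β : Type*} [Finite α] [Finite β] (f : α → β) {c : ℕ}
    (h : ∀ b, Nat.card {x // f x = b} = c) : Nat.card α = Nat.card β * c := by
  have := Fintype.ofFinite β
  rw [← Nat.card_congr (Equiv.sigmaFiberEquiv f), Nat.card_sigma]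
  simp [h, Nat.card_eq_fintype_card]

theorem Nat.prod_range_pow_sub_pow {q m a : ℕ} (ham : a ≤ m) :
    ∏ i ∈ range a, (q ^ m - q ^ i) =
      (∏ i ∈ range a, q ^ i) * ∏ i ∈ range a, (q ^ (m - a + (i + 1)) - 1) := by
  calc ∏ i ∈ range a, (q ^ m - q ^ i) = ∏ i ∈ range a, q ^ i * (q ^ (m - i) - 1) :=
        prod_congr rfl fun i hi => by
          rw [Nat.mul_sub, mul_one, ← pow_add, Nat.add_sub_cancel' ((mem_range.1 hi).le.trans ham)]
    _ = _ := by
      rw [prod_mul_distrib, ← prod_range_reflect (fun i => q ^ (m - a + (i + 1)) - 1)]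
      exact congrArg _ (prod_congr rfl fun i hi => by have := mem_range.1 hi; congr 2; omega)

theorem qBinom_eq_of_mul_eq {q k a N : ℕ} (hq : 1 < q) (ha : a ≤ k)
    (h : N * ∏ i ∈ range a, (q ^ a - q ^ i) = ∏ i ∈ range a, (q ^ k - q ^ i)) :
    qBinom q k a = N := by
  rw [Nat.prod_range_pow_sub_pow le_rfl, Nat.prod_range_pow_sub_pow ha, Nat.sub_self] at h
  simp only [zero_add] at h
  have hpow : 0 < ∏ i ∈ range a, q ^ i := prod_pos fun i _ => by positivity
  have hden : 0 < ∏ i ∈ range a, (q ^ (i + 1) - 1) :=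
    prod_pos fun i _ => Nat.sub_pos_of_lt (Nat.one_lt_pow i.succ_ne_zero hq)
  have hN : N * ∏ i ∈ range a, (q ^ (i + 1) - 1) = ∏ i ∈ range a, (q ^ (k - a + (i + 1)) - 1) :=
    Nat.eq_of_mul_eq_mul_left hpow (by rw [← h]; ring)
  rw [qBinom, ← hN, Nat.mul_div_cancel _ hden]

namespace Submodule

section Ring

variable {R E : Type*} [Ring R] [AddCommGroup E] [Module R E]

noncomputable def isComplEquivLinearMap {p q : Submodule R E} (h : IsCompl p q) :
    {r // IsCompl p r} ≃ (q →ₗ[R] p) :=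
  p.isComplEquivProj.trans
    { toFun f := f.1 ∘ₗ q.subtype
      invFun g := ⟨LinearMap.ofIsCompl h LinearMap.id g, fun x => by simp⟩
      left_inv f := Subtype.ext <| LinearMap.ofIsCompl_eq' h (by ext x; simp [f.2 x]) rfl
      right_inv g := by ext x; simp }

theorem isCompl_comap_subtype_iff {A V : Submodule R E} (hAV : A ≤ V) (C : Submodule R V) :
    IsCompl (A.comap V.subtype) C ↔ A ⊓ C.map V.subtype = ⊥ ∧ A ⊔ C.map V.subtype = V := by
  rw [V.mapIic.isCompl_iff, Set.Iic.isCompl_iff, disjoint_iff]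
  simp [map_comap_subtype, inf_of_le_right hAV]

def infEqBotAndSupEqEquivIsCompl {A V : Submodule R E} (hAV : A ≤ V) :
    {B // A ⊓ B = ⊥ ∧ A ⊔ B = V} ≃ {C : Submodule R V // IsCompl (A.comap V.subtype) C} where
  toFun B := ⟨B.1.comap V.subtype, by
    rw [isCompl_comap_subtype_iff hAV, map_comap_subtype,
      inf_of_le_right (le_sup_right.trans B.2.2.le)]
    exact B.2⟩
  invFun C := ⟨C.1.map V.subtype, (isCompl_comap_subtype_iff hAV C).1 C.2⟩
  left_inv B := Subtype.ext <| by
    simp [map_comap_subtype, inf_of_le_right (le_sup_right.trans B.2.2.le)]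
  right_inv C := Subtype.ext <| comap_map_eq_of_injective V.injective_subtype C.1

def finrankEqAndLeEquiv (V : Submodule R E) (a : ℕ) :
    {A : Submodule R E // finrank R A = a ∧ A ≤ V} ≃ {A : Submodule R V // finrank R A = a} where
  toFun A := ⟨A.1.comap V.subtype, (comapSubtypeEquivOfLe A.2.2).finrank_eq.trans A.2.1⟩
  invFun A := ⟨A.1.map V.subtype, (finrank_map_subtype_eq V A.1).trans A.2, map_subtype_le _ _⟩
  left_inv A := Subtype.ext <| by simp [map_comap_subtype, inf_of_le_right A.2.2]
  right_inv A := Subtype.ext <| comap_map_eq_of_injective V.injective_subtype A.1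

end Ring

section DivisionRing

variable {K M : Type*} [DivisionRing K] [AddCommGroup M] [Module K M]

theorem inf_eq_bot_iff_finrank_sup_eq {s t : Submodule K M} [FiniteDimensional K s]
    [FiniteDimensional K t] : s ⊓ t = ⊥ ↔ finrank K ↥(s ⊔ t) = finrank K s + finrank K t := by
  rw [← finrank_sup_add_finrank_inf_eq, left_eq_add, finrank_eq_zero]

def spanLinearIndependent {a : ℕ} (s : {s : Fin a → M // LinearIndependent K s}) :
    {W : Submodule K M // finrank K W = a} :=
  ⟨span K (range s.1), by rw [finrank_span_eq_card s.2, Fintype.card_fin]⟩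

def fiberSpanLinearIndependentEquiv [FiniteDimensional K M] {a : ℕ} (W : {W : Submodule K M // finrank K W = a}) :
    {s // spanLinearIndependent s = W} ≃ {t : Fin a → W.1 // LinearIndependent K t} where
  toFun s := ⟨fun i => ⟨s.1.1 i, by
    rw [← show span K (range s.1.1) = W.1 from congrArg Subtype.val s.2]
    exact subset_span (mem_range_self i)⟩, .of_comp W.1.subtype s.1.2⟩
  invFun t := ⟨⟨W.1.subtype ∘ t.1, t.2.map' _ W.1.ker_subtype⟩, Subtype.ext <| by
    refine eq_of_le_of_finrank_eq (span_le.2 ?_) ?_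
    · rintro _ ⟨i, rfl⟩
      exact (t.1 i).2
    · exact (spanLinearIndependent _).2.trans W.2.symm⟩
  left_inv _ := rfl
  right_inv _ := rfl

end DivisionRing

section FiniteField

variable {K M : Type*} [Field K] [Fintype K] [AddCommGroup M] [Module K M] [FiniteDimensional K M]

theorem card_isCompl (p : Submodule K M) :
    Nat.card {r // IsCompl p r} =
      Fintype.card K ^ (finrank K p * (finrank K M - finrank K p)) := by
  obtain ⟨q, h⟩ := p.exists_isCompl
  rw [Nat.card_congr (isComplEquivLinearMap h), Module.natCard_eq_pow_finrank (K := K),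
    Nat.card_eq_fintype_card, Module.finrank_linearMap, mul_comm, ← finrank_add_eq_of_isCompl h,
    Nat.add_sub_cancel_left]

theorem card_inf_eq_bot_and_sup_eq {A V : Submodule K M} (hAV : A ≤ V) :
    Nat.card {B // A ⊓ B = ⊥ ∧ A ⊔ B = V} =
      Fintype.card K ^ (finrank K A * (finrank K V - finrank K A)) := by
  rw [Nat.card_congr (infEqBotAndSupEqEquivIsCompl hAV), card_isCompl,
    (comapSubtypeEquivOfLe hAV).finrank_eq]

theorem card_finrank_eq_mul {a : ℕ} (ha : a ≤ finrank K M) :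
    Nat.card {W : Submodule K M // finrank K W = a} *
        ∏ i : Fin a, (Fintype.card K ^ a - Fintype.card K ^ (i : ℕ)) =
      ∏ i : Fin a, (Fintype.card K ^ finrank K M - Fintype.card K ^ (i : ℕ)) := by
  have := Module.finite_of_finite K (M := M)
  rw [← card_linearIndependent ha]
  refine (Nat.card_eq_mul_of_card_fiber spanLinearIndependent fun W => ?_).symm
  have := Module.finite_of_finite K (M := W.1)
  rw [Nat.card_congr (fiberSpanLinearIndependentEquiv W), card_linearIndependent W.2.ge, W.2]

theorem card_finrank_eq {a : ℕ} (ha : a ≤ finrank K M) :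
    Nat.card {W : Submodule K M // finrank K W = a} = qBinom (Fintype.card K) (finrank K M) a := by
  refine (qBinom_eq_of_mul_eq Fintype.one_lt_card ha ?_).symm
  rw [prod_range, prod_range]
  exact card_finrank_eq_mul ha

theorem card_prod_inf_eq_bot_and_sup_eq (V : Submodule K M) {a : ℕ} (ha : a ≤ finrank K V) :
    Nat.card {p : Submodule K M × Submodule K M //
        finrank K p.1 = a ∧ p.1 ⊓ p.2 = ⊥ ∧ p.1 ⊔ p.2 = V} =
      Fintype.card K ^ (a * (finrank K V - a)) * qBinom (Fintype.card K) (finrank K V) a := by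
  have := Module.finite_of_finite K (M := M)
  let first (p : {p : Submodule K M × Submodule K M //
      finrank K p.1 = a ∧ p.1 ⊓ p.2 = ⊥ ∧ p.1 ⊔ p.2 = V}) :
      {A : Submodule K M // finrank K A = a ∧ A ≤ V} :=
    ⟨p.1.1, p.2.1, le_sup_left.trans p.2.2.2.le⟩
  rw [Nat.card_eq_mul_of_card_fiber first (c := Fintype.card K ^ (a * (finrank K V - a))),
    mul_comm, Nat.card_congr (finrankEqAndLeEquiv V a), card_finrank_eq ha]
  intro A
  let e : {p // first p = A} ≃ {B // A.1 ⊓ B = ⊥ ∧ A.1 ⊔ B = V} :=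
    { toFun p := ⟨p.1.1.2, by obtain ⟨p, rfl⟩ := p; exact p.2.2⟩
      invFun B := ⟨⟨(A.1, B.1), A.2.1, B.2⟩, rfl⟩
      left_inv := by rintro ⟨p, rfl⟩; rfl
      right_inv _ := rfl }
  rw [Nat.card_congr e, card_inf_eq_bot_and_sup_eq A.2.2, A.2.1]

end FiniteField

section Elementary

variable (K L : Type) {ι : Type} [Field K] [Field L] [Algebra K L]

def extendCoeffs (W : Submodule K (ι → K)) : Submodule L (ι → L) :=
  span L (Pi.algebraMap ι K L '' W)

def restrictCoeffs (V : Submodule L (ι → L)) : Submodule K (ι → K) :=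
  (V.restrictScalars K).comap (Pi.algebraMap ι K L)

theorem gc_extendCoeffs_restrictCoeffs :
    GaloisConnection (extendCoeffs K L (ι := ι)) (restrictCoeffs K L) :=
  fun _ _ => span_le.trans image_subset_iff

variable {K L}

theorem extendCoeffs_sup (W₁ W₂ : Submodule K (ι → K)) :
    extendCoeffs K L (W₁ ⊔ W₂) = extendCoeffs K L W₁ ⊔ extendCoeffs K L W₂ :=
  (gc_extendCoeffs_restrictCoeffs K L).l_sup

theorem extendCoeffs_span (s : Set (ι → K)) :
    extendCoeffs K L (span K s) = span L (Pi.algebraMap ι K L '' s) := by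
  rw [extendCoeffs, ← map_coe, map_span, span_span_of_tower]

theorem isElementary_extendCoeffs (W : Submodule K (ι → K)) :
    IsElementary K (extendCoeffs K L W) :=
  ⟨_, by rintro _ ⟨x, _, rfl⟩ i; exact ⟨x i, rfl⟩, rfl⟩

theorem extendCoeffs_restrictCoeffs {V : Submodule L (ι → L)} (hV : IsElementary K V) :
    extendCoeffs K L (restrictCoeffs K L V) = V := by
  refine (gc_extendCoeffs_restrictCoeffs K L).l_u_le V |>.antisymm ?_
  obtain ⟨S, hS, rfl⟩ := hV
  refine span_le.2 fun v hv => ?_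
  choose x hx using hS v hv
  have hxv : Pi.algebraMap ι K L x = v := funext fun i => (hx i).symm
  exact subset_span ⟨x, show Pi.algebraMap ι K L x ∈ span L S from hxv ▸ subset_span hv, hxv⟩

theorem isElementary_iff_mem_range {V : Submodule L (ι → L)} :
    IsElementary K V ↔ V ∈ range (extendCoeffs K L) :=
  ⟨fun hV => ⟨_, extendCoeffs_restrictCoeffs hV⟩, by
    rintro ⟨W, rfl⟩
    exact isElementary_extendCoeffs W⟩

variable [Finite ι]

theorem finrank_extendCoeffs (W : Submodule K (ι → K)) :
    finrank L (extendCoeffs K L W) = finrank K W := by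
  let b := Module.finBasis K W
  have hb : LinearIndependent K (W.subtype ∘ b) := b.linearIndependent.map' _ W.ker_subtype
  have hW : span K (range (W.subtype ∘ b)) = W := by
    rw [range_comp, span_image, b.span_eq, map_top, range_subtype]
  have hE : extendCoeffs K L W = span L (range (Pi.algebraMap ι K L ∘ W.subtype ∘ b)) := by
    rw [range_comp, ← extendCoeffs_span, hW]
  have hb' : LinearIndependent L (Pi.algebraMap ι K L ∘ W.subtype ∘ b) :=
    linearIndependent_algebraMap_comp_iff.2 hb
  rw [hE, finrank_span_eq_card hb', Fintype.card_fin]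

theorem restrictCoeffs_extendCoeffs (W : Submodule K (ι → K)) :
    restrictCoeffs K L (extendCoeffs K L W) = W := by
  have gc := gc_extendCoeffs_restrictCoeffs K L (ι := ι)
  refine (eq_of_le_of_finrank_le (gc.le_u_l W) ?_).symm
  rw [← finrank_extendCoeffs (L := L), ← finrank_extendCoeffs (L := L) W]
  exact finrank_mono (gc.l_u_le _)

theorem extendCoeffs_injective : Function.Injective (extendCoeffs K L (ι := ι)) :=
  Function.LeftInverse.injective restrictCoeffs_extendCoeffs

theorem extendCoeffs_le_extendCoeffs_iff {W₁ W₂ : Submodule K (ι → K)} :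
    extendCoeffs K L W₁ ≤ extendCoeffs K L W₂ ↔ W₁ ≤ W₂ := by
  rw [gc_extendCoeffs_restrictCoeffs, restrictCoeffs_extendCoeffs]

theorem extendCoeffs_inf_eq_bot_and_sup_eq_iff {W₁ W₂ W : Submodule K (ι → K)} :
    extendCoeffs K L W₁ ⊓ extendCoeffs K L W₂ = ⊥ ∧
        extendCoeffs K L W₁ ⊔ extendCoeffs K L W₂ = extendCoeffs K L W ↔
      W₁ ⊓ W₂ = ⊥ ∧ W₁ ⊔ W₂ = W := by
  rw [inf_eq_bot_iff_finrank_sup_eq, inf_eq_bot_iff_finrank_sup_eq, ← extendCoeffs_sup,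
    finrank_extendCoeffs, finrank_extendCoeffs, finrank_extendCoeffs,
    extendCoeffs_injective.eq_iff]

theorem card_isElementary_and (P : Submodule L (ι → L) → Prop) :
    Nat.card {V // IsElementary K V ∧ P V} =
      Nat.card {W : Submodule K (ι → K) // P (extendCoeffs K L W)} := by
  have e : {V // IsElementary K V ∧ P V} ≃ ↥(extendCoeffs K L '' {W | P (extendCoeffs K L W)}) :=
    Equiv.subtypeEquivRight fun V => by
      rw [isElementary_iff_mem_range]
      aesop
  rw [Nat.card_congr e, Nat.card_image_of_injective extendCoeffs_injective]
  rfl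

theorem card_prod_isElementary_and (P : Submodule L (ι → L) × Submodule L (ι → L) → Prop) :
    Nat.card {p // IsElementary K p.1 ∧ IsElementary K p.2 ∧ P p} =
      Nat.card {p : Submodule K (ι → K) × Submodule K (ι → K) //
        P (extendCoeffs K L p.1, extendCoeffs K L p.2)} := by
  have e : {p // IsElementary K p.1 ∧ IsElementary K p.2 ∧ P p} ≃
      ↥(Prod.map (extendCoeffs K L) (extendCoeffs K L) ''
        {p | P (extendCoeffs K L p.1, extendCoeffs K L p.2)}) :=
    Equiv.subtypeEquivRight fun V => by
      rw [isElementary_iff_mem_range, isElementary_iff_mem_range]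
      aesop
  rw [Nat.card_congr e,
    Nat.card_image_of_injective (extendCoeffs_injective.prodMap extendCoeffs_injective)]
  rfl

end Elementary

end Submodule

/-- Counting elementary complements of A inside V, and ordered complementary pairs. -/
theorem card_elementary_complements
    (Fq Fqm : Type) [Field Fq] [Fintype Fq] [Field Fqm] [Algebra Fq Fqm]
    (q n k a : ℕ) (hq : Fintype.card Fq = q) (ha : a ≤ k)
    (V A : Submodule Fqm (Fin n → Fqm))
    (hV : IsElementary Fq V) (hdV : Module.finrank Fqm V = k)
    (hA : IsElementary Fq A) (hdA : Module.finrank Fqm A = a) (hAV : A ≤ V) :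
    Nat.card {B : Submodule Fqm (Fin n → Fqm) //
        IsElementary Fq B ∧ Module.finrank Fqm B = k - a ∧ A ⊓ B = ⊥ ∧ A ⊔ B = V} =
      q ^ (a * (k - a)) ∧
    Nat.card {p : Submodule Fqm (Fin n → Fqm) × Submodule Fqm (Fin n → Fqm) //
        IsElementary Fq p.1 ∧ IsElementary Fq p.2 ∧
        Module.finrank Fqm p.1 = a ∧ Module.finrank Fqm p.2 = k - a ∧
        p.1 ⊓ p.2 = ⊥ ∧ p.1 ⊔ p.2 = V} =
      q ^ (a * (k - a)) * qBinom q k a := by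
  subst hq
  obtain ⟨WA, rfl⟩ := isElementary_iff_mem_range.1 hA
  obtain ⟨WV, rfl⟩ := isElementary_iff_mem_range.1 hV
  rw [finrank_extendCoeffs] at hdA hdV
  have finrank_compl {W₁ W₂ : Submodule Fq (Fin n → Fq)} (h : W₁ ⊓ W₂ = ⊥ ∧ W₁ ⊔ W₂ = WV) :
      finrank Fq W₂ = k - finrank Fq W₁ := by
    have := inf_eq_bot_iff_finrank_sup_eq.1 h.1
    rw [h.2, hdV] at this
    omega
  constructor
  · rw [card_isElementary_and, ← hdA, ← hdV,
      ← card_inf_eq_bot_and_sup_eq (extendCoeffs_le_extendCoeffs_iff.1 hAV)]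
    refine Nat.card_congr (Equiv.subtypeEquivRight fun W => ?_)
    rw [finrank_extendCoeffs, extendCoeffs_inf_eq_bot_and_sup_eq_iff, hdV]
    exact and_iff_right_of_imp finrank_compl
  · rw [card_prod_isElementary_and, ← hdV, ← card_prod_inf_eq_bot_and_sup_eq WV (hdV ▸ ha)]
    refine Nat.card_congr (Equiv.subtypeEquivRight fun p => ?_)
    rw [finrank_extendCoeffs, finrank_extendCoeffs, extendCoeffs_inf_eq_bot_and_sup_eq_iff, hdV]
    constructor
    · exact fun h => ⟨h.1, h.2.2⟩
    · exact fun h => ⟨h.1, h.1 ▸ finrank_compl h.2, h.2⟩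
end
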